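/- With H = H₀ ⊙ V₁ the trivial extension of a hyperplane H₀ of the k-Grassmannian of V₀ by V₁ (where V = V₀ ⊕ V₁), the upper radical satisfies: a (k−1)-dimensional subspace X of V belongs to R^↑(H) if and only if either X ∩ V₁ ≠ 0 or π(X) ∈ R^↑(H₀), where π is the projection onto V₀ along V₁. -/

import Mathlib

/-!
Write `π : V → W` for a surjective linear map and `φ = φ₀ ∘ π`. The form `φ` vanishes on a
`k`-subspace `U` iff `φ₀` vanishes on `π U`, which is automatic when `U` meets `ker π`, since
then `dim π U < k`. So if `X` meets `ker π`, every `k`-subspace through `X` is in the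
hyperplane. Otherwise `π` maps `X` isomorphically onto `π X`, and every `k`-subspace `U₀ ⊇ π X`
is `π U` for `U = X + ⟨u⟩` with `π u ∈ U₀ \ π X`, so `X ∈ R^↑(φ)` iff `π X ∈ R^↑(φ₀)`.
-/

open Module

namespace Submodule

variable {K V W : Type*} [Field K] [AddCommGroup V] [Module K V] [FiniteDimensional K V]
  [AddCommGroup W] [Module K W]

theorem finrank_map_add_finrank_inf_ker (f : V →ₗ[K] W) (U : Submodule K V) :
    finrank K (U.map f) + finrank K ↥(U ⊓ LinearMap.ker f) = finrank K U := by
  have h := LinearMap.finrank_range_add_finrank_ker (f ∘ₗ U.subtype)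
  rwa [LinearMap.range_comp, range_subtype, LinearMap.ker_comp, ← finrank_map_subtype_eq,
    map_comap_subtype] at h

theorem finrank_map_eq_iff_inf_ker_eq_bot (f : V →ₗ[K] W) (U : Submodule K V) :
    finrank K (U.map f) = finrank K U ↔ U ⊓ LinearMap.ker f = ⊥ := by
  rw [← finrank_eq_zero]
  have := finrank_map_add_finrank_inf_ker f U
  omega

theorem exists_le_finrank_eq_succ_map_eq {f : V →ₗ[K] W} (hf : Function.Surjective f)
    {X : Submodule K V} {U₀ : Submodule K W} (hle : X.map f ≤ U₀)
    (hU₀ : finrank K U₀ = finrank K (X.map f) + 1) :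
    ∃ U : Submodule K V, X ≤ U ∧ finrank K U = finrank K X + 1 ∧ U.map f = U₀ := by
  have : Module.Finite K W := Module.Finite.of_surjective f hf
  have hlt : X.map f < U₀ := lt_of_le_of_ne hle fun h => by rw [h] at hU₀; omega
  obtain ⟨w, hwU₀, hwX⟩ := SetLike.exists_of_lt hlt
  obtain ⟨u, rfl⟩ := hf w
  have huX : u ∉ X := fun hu => hwX (mem_map_of_mem hu)
  have hmap : (X ⊔ K ∙ u).map f = X.map f ⊔ K ∙ f u := by
    rw [map_sup, map_span, Set.image_singleton]
  refine ⟨X ⊔ K ∙ u, le_sup_left, finrank_sup_span_singleton huX, ?_⟩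
  refine eq_of_le_of_finrank_le ?_ ?_
  · rw [hmap]
    exact sup_le hle ((span_singleton_le_iff_mem _ _).mpr hwU₀)
  · rw [hmap, finrank_sup_span_singleton hwX, hU₀]

end Submodule

namespace AlternatingMap

variable {K V W : Type*} [Field K] [AddCommGroup V] [Module K V] [AddCommGroup W] [Module K W]
  {k : ℕ}

/-- `U` belongs to the hyperplane of the `k`-Grassmannian defined by `φ`. -/
def VanishesOn (φ : AlternatingMap K V K (Fin k)) (U : Submodule K V) : Prop :=
  ∀ v : Fin k → V, (∀ i, v i ∈ U) → φ v = 0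

/-- `X ∈ R^↑(H)` for the hyperplane `H` of `k`-subspaces on which `φ` vanishes. -/
def MemUpperRadical (φ : AlternatingMap K V K (Fin k)) (X : Submodule K V) : Prop :=
  ∀ U : Submodule K V, finrank K U = k → X ≤ U → φ.VanishesOn U

theorem vanishesOn_of_finrank_lt (φ : AlternatingMap K V K (Fin k)) {U : Submodule K V}
    [FiniteDimensional K U] (hU : finrank K U < k) : φ.VanishesOn U := by
  intro v hv
  refine φ.map_linearDependent v fun hind => ?_
  have hspan : Submodule.span K (Set.range v) ≤ U :=
    Submodule.span_le.mpr (Set.range_subset_iff.mpr hv)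
  have := Submodule.finrank_mono hspan
  rw [finrank_span_eq_card hind, Fintype.card_fin] at this
  omega

theorem vanishesOn_compLinearMap_iff (φ₀ : AlternatingMap K W K (Fin k)) (f : V →ₗ[K] W)
    (U : Submodule K V) : (φ₀.compLinearMap f).VanishesOn U ↔ φ₀.VanishesOn (U.map f) := by
  constructor
  · intro h w hw
    choose v hvU hvw using fun i => Submodule.mem_map.mp (hw i)
    simpa [funext hvw] using h v hvU
  · intro h v hv
    exact h (f ∘ v) fun i => Submodule.mem_map_of_mem (hv i)

variable [FiniteDimensional K V]

theorem memUpperRadical_compLinearMap_of_inf_ker_ne_bot (φ₀ : AlternatingMap K W K (Fin k))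
    (f : V →ₗ[K] W) {X : Submodule K V} (hX : X ⊓ LinearMap.ker f ≠ ⊥) :
    (φ₀.compLinearMap f).MemUpperRadical X := by
  intro U hU hXU
  rw [vanishesOn_compLinearMap_iff]
  apply vanishesOn_of_finrank_lt
  have hUker : U ⊓ LinearMap.ker f ≠ ⊥ := fun h =>
    hX (le_bot_iff.mp (h ▸ inf_le_inf_right _ hXU))
  have hne := mt (Submodule.finrank_map_eq_iff_inf_ker_eq_bot f U).mp hUker
  have hle := Submodule.finrank_map_le f U
  omega

theorem memUpperRadical_compLinearMap_of_map (φ₀ : AlternatingMap K W K (Fin k))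
    (f : V →ₗ[K] W) {X : Submodule K V} (hX : φ₀.MemUpperRadical (X.map f)) :
    (φ₀.compLinearMap f).MemUpperRadical X := by
  intro U hU hXU
  rw [vanishesOn_compLinearMap_iff]
  rcases (hU ▸ Submodule.finrank_map_le f U).lt_or_eq with hlt | heq
  · exact vanishesOn_of_finrank_lt φ₀ hlt
  · exact hX _ heq (Submodule.map_mono hXU)

theorem memUpperRadical_map_of_compLinearMap (φ₀ : AlternatingMap K W K (Fin k))
    {f : V →ₗ[K] W} (hf : Function.Surjective f) {X : Submodule K V}
    (hk : 1 ≤ k) (hX : finrank K X = k - 1) (hXf : finrank K (X.map f) = k - 1)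
    (h : (φ₀.compLinearMap f).MemUpperRadical X) : φ₀.MemUpperRadical (X.map f) := by
  intro U₀ hU₀ hle
  obtain ⟨U, hXU, hU, rfl⟩ :=
    Submodule.exists_le_finrank_eq_succ_map_eq hf hle (by omega)
  exact (vanishesOn_compLinearMap_iff φ₀ f U).mp (h U (by omega) hXU)

theorem memUpperRadical_compLinearMap_iff (φ₀ : AlternatingMap K W K (Fin k))
    {f : V →ₗ[K] W} (hf : Function.Surjective f) {X : Submodule K V}
    (hk : 1 ≤ k) (hX : finrank K X = k - 1) :
    (φ₀.compLinearMap f).MemUpperRadical X ↔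
      X ⊓ LinearMap.ker f ≠ ⊥ ∨
        (finrank K (X.map f) = k - 1 ∧ φ₀.MemUpperRadical (X.map f)) := by
  refine ⟨fun h => or_iff_not_imp_left.mpr fun hker => ?_, ?_⟩
  · have hXf : finrank K (X.map f) = k - 1 :=
      hX ▸ (Submodule.finrank_map_eq_iff_inf_ker_eq_bot f X).mpr (not_not.mp hker)
    exact ⟨hXf, memUpperRadical_map_of_compLinearMap φ₀ hf hk hX hXf h⟩
  · rintro (hker | ⟨-, h₀⟩)
    · exact memUpperRadical_compLinearMap_of_inf_ker_ne_bot φ₀ f hker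
    · exact memUpperRadical_compLinearMap_of_map φ₀ f h₀

end AlternatingMap

theorem stmt_8_general (K V : Type*) [Field K] [AddCommGroup V] [Module K V] [FiniteDimensional K V]
    (k : ℕ)
    (V₀ V₁ : Submodule K V) (hc : IsCompl V₀ V₁)
    (hk : 3 ≤ k)
    (φ₀ : AlternatingMap K V₀ K (Fin k))
    (φ : AlternatingMap K V K (Fin k))
    (hφ : ∀ v : Fin k → V,
      φ v = φ₀ (fun i => Submodule.linearProjOfIsCompl V₀ V₁ hc (v i)))
    (X : Submodule K V) (hX : finrank K X = k - 1) :
    (∀ U : Submodule K V, finrank K U = k → X ≤ U →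
        ∀ v : Fin k → V, (∀ i, v i ∈ U) → φ v = 0) ↔
      (X ⊓ V₁ ≠ ⊥ ∨
        (finrank K (X.map (Submodule.linearProjOfIsCompl V₀ V₁ hc)) = k - 1 ∧
          ∀ U₀ : Submodule K V₀, finrank K U₀ = k →
            X.map (Submodule.linearProjOfIsCompl V₀ V₁ hc) ≤ U₀ →
              ∀ w : Fin k → V₀, (∀ i, w i ∈ U₀) → φ₀ w = 0)) := by
  obtain rfl : φ = φ₀.compLinearMap (Submodule.projectionOnto V₀ V₁ hc) := AlternatingMap.ext hφ
  have h := φ₀.memUpperRadical_compLinearMap_iff (Submodule.projectionOnto_surjective hc)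
    (by omega) hX
  rwa [Submodule.ker_projectionOnto] at h

/-- Trivial extension and upper radicals: with `H = H₀ ⊙ V₁` the trivial extension of the
hyperplane `H₀` of the `k`-Grassmannian of `V₀` (given by `φ₀`) by `V₁`, a `(k-1)`-subspace
`X` of `V` lies in `R^↑(H)` iff either `X ∩ V₁ ≠ 0` or `π(X) ∈ R^↑(H₀)`. -/
theorem stmt_8 (K V : Type*) [Field K] [AddCommGroup V] [Module K V] [FiniteDimensional K V]
    (n n₀ k : ℕ) (hn : finrank K V = n)
    (V₀ V₁ : Submodule K V) (hc : IsCompl V₀ V₁)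
    (hn₀ : finrank K V₀ = n₀) (hk : 3 ≤ k) (hkn₀ : k < n₀) (hn₀n : n₀ < n)
    (φ₀ : AlternatingMap K V₀ K (Fin k)) (hφ₀ : φ₀ ≠ 0)
    (φ : AlternatingMap K V K (Fin k))
    (hφ : ∀ v : Fin k → V,
      φ v = φ₀ (fun i => Submodule.linearProjOfIsCompl V₀ V₁ hc (v i)))
    (X : Submodule K V) (hX : finrank K X = k - 1) :
    (∀ U : Submodule K V, finrank K U = k → X ≤ U →
        ∀ v : Fin k → V, (∀ i, v i ∈ U) → φ v = 0) ↔
      (X ⊓ V₁ ≠ ⊥ ∨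
        (finrank K (X.map (Submodule.linearProjOfIsCompl V₀ V₁ hc)) = k - 1 ∧
          ∀ U₀ : Submodule K V₀, finrank K U₀ = k →
            X.map (Submodule.linearProjOfIsCompl V₀ V₁ hc) ≤ U₀ →
              ∀ w : Fin k → V₀, (∀ i, w i ∈ U₀) → φ₀ w = 0)) :=
  stmt_8_general K V k V₀ V₁ hc hk φ₀ φ hφ X hX
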